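/- If a discrete form Ω : ℤ⁴ → Cl satisfies equation (3.17): −DΩ = mΩe, then the form Ωe₁e₂e₃ satisfies the same equation with the sign of the mass term reversed: −D(Ωe₁e₂e₃) = −m(Ωe₁e₂e₃)e. -/

import Mathlib

noncomputable section

/-- The Minkowski quadratic form `Q v = v₀² − v₁² − v₂² − v₃²` on `ℂ⁴`. -/
def Q : QuadraticForm ℂ (Fin 4 → ℂ) :=
  QuadraticMap.weightedSumSquares ℂ ![(1 : ℂ), -1, -1, -1]

/-- The Clifford algebra of spacetime over `ℂ`. -/
abbrev Cl : Type := CliffordAlgebra Q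

/-- The generators `e_μ`, images of the standard basis vectors. -/
def e (μ : Fin 4) : Cl := CliffordAlgebra.ι Q (Pi.single μ 1)

/-- The volume element `e = e₀e₁e₂e₃`. -/
def eV : Cl := e 0 * e 1 * e 2 * e 3

/-- The difference operator `(Δ_μ Ω)(k) = Ω(k + 1_μ) − Ω(k)`. -/
def Δ (μ : Fin 4) (Ω : (Fin 4 → ℤ) → Cl) : (Fin 4 → ℤ) → Cl :=
  fun k => Ω (k + Pi.single μ 1) - Ω k

/-- The discrete Dirac operator `DΩ = Σ_μ e_μ · (Δ_μ Ω)`. -/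
def Dirac (Ω : (Fin 4 → ℤ) → Cl) : (Fin 4 → ℤ) → Cl :=
  fun k => ∑ μ : Fin 4, e μ * Δ μ Ω k

/-! `D` multiplies from the left, so it commutes with right multiplication by `e₁e₂e₃`; the
volume element `e = e₀(e₁e₂e₃)` anticommutes with `e₁e₂e₃`, because `e₀` anticommutes with
each of its three factors. Moving `e₁e₂e₃` past `e` therefore flips the sign of the mass term. -/

theorem QuadraticMap.isOrtho_weightedSumSquares_single {ι R S : Type*} [Fintype ι]
    [DecidableEq ι] [CommSemiring R] [Monoid S] [DistribMulAction S R] [SMulCommClass S R R]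
    (w : ι → S) {i j : ι} (h : i ≠ j) (a b : R) :
    (weightedSumSquares R w).IsOrtho (Pi.single i a) (Pi.single j b) := by
  rw [isOrtho_def]
  simp only [weightedSumSquares_apply, ← Finset.sum_add_distrib, ← smul_add]
  refine Finset.sum_congr rfl fun k _ => congrArg (w k • ·) ?_
  rcases eq_or_ne k i with rfl | hki
  · simp [h]
  · simp [hki]

theorem e_mul_e_of_ne {μ ν : Fin 4} (h : μ ≠ ν) : e μ * e ν = -(e ν * e μ) :=
  CliffordAlgebra.ι_mul_ι_comm_of_isOrtho
    (QuadraticMap.isOrtho_weightedSumSquares_single _ h 1 1)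

theorem semiconjBy_e_neg {μ ν : Fin 4} (h : μ ≠ ν) : SemiconjBy (e μ) (e ν) (-e ν) := by
  rw [SemiconjBy, neg_mul]
  exact e_mul_e_of_ne h

theorem e_zero_mul_e_one_two_three : e 0 * (e 1 * e 2 * e 3) = -(e 1 * e 2 * e 3 * e 0) := by
  have h := ((semiconjBy_e_neg (by decide : (0 : Fin 4) ≠ 1)).mul_right
    (semiconjBy_e_neg (by decide : (0 : Fin 4) ≠ 2))).mul_right
    (semiconjBy_e_neg (by decide : (0 : Fin 4) ≠ 3))
  simpa only [SemiconjBy, neg_mul, mul_neg, neg_neg] using h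

theorem eV_mul_e_one_two_three : eV * (e 1 * e 2 * e 3) = -(e 1 * e 2 * e 3 * eV) := by
  set c := e 1 * e 2 * e 3
  have hV : eV = e 0 * c := by simp only [eV, c, mul_assoc]
  have hc : c * e 0 = -(e 0 * c) := by rw [e_zero_mul_e_one_two_three, neg_neg]
  rw [hV, ← mul_assoc c, hc, neg_mul, neg_neg]

theorem Δ_mul_right (μ : Fin 4) (Ω : (Fin 4 → ℤ) → Cl) (c : Cl) :
    Δ μ (fun k => Ω k * c) = fun k => Δ μ Ω k * c :=
  funext fun _ => (sub_mul _ _ _).symm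

theorem Dirac_mul_right (Ω : (Fin 4 → ℤ) → Cl) (c : Cl) (k : Fin 4 → ℤ) :
    Dirac (fun k => Ω k * c) k = Dirac Ω k * c := by
  simp only [Dirac, Δ_mul_right, ← mul_assoc, Finset.sum_mul]

/-- If `Ω` satisfies equation (3.17): `−DΩ = mΩe`, then `Ωe₁e₂e₃` satisfies the
same equation with the sign of the mass term reversed. -/
theorem stmt_15 (m : ℝ) (Ω : (Fin 4 → ℤ) → Cl)
    (hΩ : ∀ k, -(Dirac Ω k) = (m : ℂ) • (Ω k * eV)) :
    ∀ k, -(Dirac (fun k => Ω k * (e 1 * e 2 * e 3)) k) =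
      -((m : ℂ) • ((Ω k * (e 1 * e 2 * e 3)) * eV)) := by
  intro k
  rw [Dirac_mul_right, ← neg_mul, hΩ k, smul_mul_assoc, mul_assoc, eV_mul_e_one_two_three,
    mul_neg, smul_neg, ← mul_assoc]
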